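/- arXiv:1906.03759 — 2 statements merged into one kernel-verified Lean document; each statement's English description precedes it below -/
import Mathlib

section
/- Let N, M be positive integers with 2M ≤ N, let U, D, U', D' ⊆ {1,…,M} satisfy U∪D = U'∪D', U∩D = U'∩D' and 1 ∈ U∩D (hence 1 ∈ U'∩D'), and let α, β ∈ {2,…,M}∖(U∪D). Write W̄ := {N+1−w : w∈W}, αU := U∪{α}, βD := D∪{β}. Then the following three quantities are unchanged when (U,D) is replaced by (U',D'): (i) Δ((U∖{1})∪D̄)·Δ(αU∪(βD)‾) / [Δ(U∪D̄)·Δ((αU∖{1})∪(βD)‾)]; (ii) Δ(αU∪D̄)·Δ((U∖{1})∪(βD)‾) / [Δ(U∪D̄)·Δ((αU∖{1})∪(βD)‾)]; (iii) Δ(U∪(βD)‾)·Δ((αU∖{1})∪D̄) / [Δ(U∪D̄)·Δ((αU∖{1})∪(βD)‾)]. (All the sets occurring consist of distinct integers, so all the Δ's are nonzero.) -/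
open Finset

namespace Shuf

/-- A unit triangle of the triangular lattice: `(a, b, o)` where `o = false` is the
up-pointing unit triangle with vertices `(a,b), (a+1,b), (a,b+1)` (in the lattice
coordinates whose embedding is `(a,b) ↦ (a + b/2, b·√3/2)`), and `o = true` is the
down-pointing unit triangle with vertices `(a+1,b), (a,b+1), (a+1,b+1)`. -/
abbrev Tri : Type := ℤ × ℤ × Bool

/-- Adjacency from an up-pointing triangle `s` to a down-pointing triangle `t`
(sharing a unit edge). -/
def adjUD (s t : Tri) : Prop :=
  s.2.2 = false ∧ t.2.2 = true ∧
    ((t.1 = s.1 ∧ t.2.1 = s.2.1) ∨ (t.1 = s.1 - 1 ∧ t.2.1 = s.2.1) ∨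
      (t.1 = s.1 ∧ t.2.1 = s.2.1 - 1))

/-- Two unit triangles share a unit edge (form a lozenge). -/
def adj (s t : Tri) : Prop := adjUD s t ∨ adjUD t s

/-- A lozenge tiling of the region `R` with barrier edges `Bar`, encoded as the
involution pairing each unit triangle of `R` with the one it is matched to. -/
def IsTiling (R : Set Tri) (Bar : Set (Tri × Tri)) (f : Tri → Tri) : Prop :=
  (∀ t, t ∉ R → f t = t) ∧
    ∀ t ∈ R, f t ∈ R ∧ adj t (f t) ∧ f (f t) = t ∧ (t, f t) ∉ Bar ∧ (f t, t) ∉ Bar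

/-- `M R Bar` : the number of lozenge tilings of the region `R` with barriers `Bar`. -/
noncomputable def M (R : Set Tri) (Bar : Set (Tri × Tri)) : ℕ :=
  Nat.card {f : Tri → Tri // IsTiling R Bar f}

/-- 180° rotation about the point `(c.1/2, c.2/2)` (lattice coordinates). -/
def rot (c : ℤ × ℤ) (t : Tri) : Tri := (c.1 - t.1 - 1, c.2 - t.2.1 - 1, !t.2.2)

/-- `Mc c R Bar` : the number of lozenge tilings of `R` invariant under the 180°
rotation about the point `(c.1/2, c.2/2)`. -/
noncomputable def Mc (c : ℤ × ℤ) (R : Set Tri) (Bar : Set (Tri × Tri)) : ℕ :=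
  Nat.card {f : Tri → Tri // IsTiling R Bar f ∧ ∀ t, f (rot c t) = rot c (f t)}

/-- The doubly-dented hexagon whose horizontal axis (at height `0`) runs from the
west vertex `(0,0)` to the east vertex `(L,0)`, whose upper half is a trapezoid of
height `hu` and whose lower half is a trapezoid of height `hd`; the up-pointing unit
triangle just above the axis at position `i` is removed for `i ∈ U`, and the
down-pointing one just below the axis at position `i` is removed for `i ∈ D`
(positions are labelled `1,…,L` from left to right). -/
def HRegion (L hu hd : ℤ) (U D : Set ℤ) : Set Tri :=
  {t | (t.2.2 = false ∧ 0 ≤ t.2.1 ∧ t.2.1 < hu ∧ 0 ≤ t.1 ∧ t.1 + t.2.1 ≤ L - 1 ∧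
          (t.2.1 = 0 → t.1 + 1 ∉ U)) ∨
       (t.2.2 = true ∧ 0 ≤ t.2.1 ∧ t.2.1 < hu ∧ 0 ≤ t.1 ∧ t.1 + t.2.1 ≤ L - 2) ∨
       (t.2.2 = false ∧ -hd ≤ t.2.1 ∧ t.2.1 ≤ -1 ∧ -t.2.1 ≤ t.1 ∧ t.1 ≤ L - 1) ∨
       (t.2.2 = true ∧ -hd ≤ t.2.1 ∧ t.2.1 ≤ -1 ∧ -t.2.1 - 1 ≤ t.1 ∧ t.1 ≤ L - 1 ∧
          (t.2.1 = -1 → t.1 + 1 ∉ D))}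

/-- The barrier edges along the axis at the positions of `B`: the barrier at
position `i` forbids the vertical lozenge formed by the up-triangle just above and
the down-triangle just below the `i`-th unit segment of the axis. -/
def HBar (B : Set ℤ) : Set (Tri × Tri) :=
  {e | ∃ i ∈ B, e = ((i - 1, 0, false), (i - 1, -1, true)) ∨
                 e = ((i - 1, -1, true), (i - 1, 0, false))}

/-- `MH x y U D B` : the number of lozenge tilings of the doubly-dented hexagon
`H_{x,y}(U; D; B)`. -/
noncomputable def MH (x y : ℕ) (U D B : Finset ℤ) : ℕ :=
  M (HRegion (x + y + (U ∪ D).card) (y + U.card) (y + D.card) ↑U ↑D) (HBar ↑B)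

/-- `mir N W = {N + 1 - w : w ∈ W}`, the reflection of an index set. -/
def mir (N : ℤ) (W : Finset ℤ) : Finset ℤ := W.image (fun w => N + 1 - w)

/-- `MCS x y U D B` : the number of lozenge tilings of the centrally symmetric
doubly-dented hexagon `CS_{x,y}(U; D; B) = H_{x,y}(U ∪ D̄; D ∪ Ū; B ∪ B̄)`,
where `N = x + y + 2|U ∪ D|` and `W̄ = {N+1-w : w ∈ W}`. -/
noncomputable def MCS (x y : ℕ) (U D B : Finset ℤ) : ℕ :=
  MH x y (U ∪ mir (x + y + 2 * (U ∪ D).card) D) (D ∪ mir (x + y + 2 * (U ∪ D).card) U)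
    (B ∪ mir (x + y + 2 * (U ∪ D).card) B)

/-- `McCS x y U D B` : the number of centrally symmetric lozenge tilings of
`CS_{x,y}(U; D; B)` (tilings invariant under the 180° rotation about the center
`(N/2, 0)` of the region, `N = x + y + 2|U ∪ D|`). -/
noncomputable def McCS (x y : ℕ) (U D B : Finset ℤ) : ℕ :=
  let N : ℤ := x + y + 2 * (U ∪ D).card
  let U' : Finset ℤ := U ∪ mir N D
  let D' : Finset ℤ := D ∪ mir N U
  Mc (N, 0)
    (HRegion (x + y + (U' ∪ D').card) (y + U'.card) (y + D'.card) ↑U' ↑D')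
    (HBar ↑(B ∪ mir N B))

/-- `Δprod S = ∏_{s < s' ∈ S} (s' - s)`. -/
def Δprod (S : Finset ℤ) : ℤ :=
  ∏ p ∈ (S ×ˢ S).filter (fun p => p.1 < p.2), (p.2 - p.1)

/-- MacMahon's box formula `PP(a,b,c)`. -/
def PP (a b c : ℕ) : ℚ :=
  ∏ i ∈ Icc 1 a, ∏ j ∈ Icc 1 b, ∏ k ∈ Icc 1 c,
    (((i : ℚ) + j + k - 1) / ((i : ℚ) + j + k - 2))

/-- The hyperfactorial `H(n) = 0!·1!⋯(n-1)!`. -/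
def hyperfac (n : ℕ) : ℕ := ∏ k ∈ range n, k.factorial

/-- The Pochhammer symbol `(q)_r = q(q+1)⋯(q+r-1)`. -/
def poch (q : ℚ) (r : ℕ) : ℚ := ∏ i ∈ range r, (q + i)

/-- The dented semihexagon `T_{a,b}(S)`: the trapezoid with north side `b`, slanted
sides `a` and base `a + b` lying above the horizontal axis (base from `(0,0)` to
`(a+b,0)`), with the up-pointing unit triangles at the positions of `S` removed
from its base. -/
def TRegion (a b : ℤ) (S : Set ℤ) : Set Tri :=
  {t | (t.2.2 = false ∧ 0 ≤ t.2.1 ∧ t.2.1 < a ∧ 0 ≤ t.1 ∧ t.1 + t.2.1 ≤ a + b - 1 ∧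
          (t.2.1 = 0 → t.1 + 1 ∉ S)) ∨
       (t.2.2 = true ∧ 0 ≤ t.2.1 ∧ t.2.1 < a ∧ 0 ≤ t.1 ∧ t.1 + t.2.1 ≤ a + b - 2)}

/-- `MT a b S` : the number of lozenge tilings of `T_{a,b}(S)`. -/
noncomputable def MT (a b : ℤ) (S : Finset ℤ) : ℕ := M (TRegion a b ↑S) ∅

/-- The trapezoid with base `L` (from `(0,0)` to `(L,0)`), height `h`. -/
def trapRegion (L h : ℤ) : Set Tri :=
  {t | (t.2.2 = false ∧ 0 ≤ t.2.1 ∧ t.2.1 < h ∧ 0 ≤ t.1 ∧ t.1 + t.2.1 ≤ L - 1) ∨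
       (t.2.2 = true ∧ 0 ≤ t.2.1 ∧ t.2.1 < h ∧ 0 ≤ t.1 ∧ t.1 + t.2.1 ≤ L - 2)}

/-- The unit triangles of the up-pointing triangle of side `s` whose base runs from
`(p,0)` to `(p+s,0)` (lying above the axis). -/
def upTriSet (p : ℤ) (s : ℕ) : Set Tri :=
  {t | t.2.2 = false ∧ 0 ≤ t.2.1 ∧ p ≤ t.1 ∧ t.1 + t.2.1 ≤ p + s - 1} ∪
  {t | t.2.2 = true ∧ 0 ≤ t.2.1 ∧ p ≤ t.1 ∧ t.1 + t.2.1 ≤ p + s - 2}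

/-- The unit triangles of the down-pointing triangle of side `s` whose top edge runs
from `(p,0)` to `(p+s,0)` (lying below the axis). -/
def downTriSet (p : ℤ) (s : ℕ) : Set Tri :=
  {t | t.2.2 = true ∧ -(s : ℤ) ≤ t.2.1 ∧ t.2.1 ≤ -1 ∧ p - t.2.1 - 1 ≤ t.1 ∧ t.1 ≤ p + s - 1} ∪
  {t | t.2.2 = false ∧ -(s : ℤ) ≤ t.2.1 ∧ t.2.1 ≤ -1 ∧ p - t.2.1 ≤ t.1 ∧ t.1 ≤ p + s - 1}

/-- A triangle of side `s` along the axis starting at `p`, up- or down-pointing. -/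
def triSet (p : ℤ) (s : ℕ) (up : Bool) : Set Tri :=
  if up then upTriSet p s else downTriSet p s

/-- The removed triangles, at the dents given by a run/gap sequence
`a₁ (run), a₂ (gap), a₃ (run), …` starting at `p`. -/
def seqRemoved : ℤ → List ℕ → Set Tri
  | _, [] => ∅
  | p, [s] => upTriSet p s
  | p, s :: g :: r => upTriSet p s ∪ seqRemoved (p + s + g) r

/-- `oSum [a₁,a₂,…] = a₁ + a₃ + a₅ + ⋯`. -/
def oSum : List ℕ → ℕ
  | [] => 0
  | [s] => s
  | s :: _ :: r => s + oSum r

/-- `sFun l = s(a₁,…,a_r)` : the number of lozenge tilings of the generalized dented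
semihexagon `S(a₁,…,a_r)` (trapezoid of base `a₁+⋯+a_r` and height `a₁+a₃+⋯`, with
up-pointing triangles of sides `a₁, a₃, …` removed from its base at mutual
distances `a₂, a₄, …`, the first one touching the west vertex). -/
noncomputable def sFun (l : List ℕ) : ℕ :=
  M (trapRegion l.sum (oSum l) \ seqRemoved 0 l) ∅

/-- A fern: a chain of lattice triangles of alternating orientations along the axis,
given by the list of side-lengths and the orientation of the first triangle. -/
structure Fern where
  lengths : List ℕ
  firstUp : Bool

/-- The total length of a fern. -/
def Fern.total (F : Fern) : ℕ := F.lengths.sum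

/-- Sum of the entries at even positions if the flag is `true` (resp. odd positions
if `false`). -/
def upLenAux : Bool → List ℕ → ℕ
  | _, [] => 0
  | true, s :: r => s + upLenAux false r
  | false, _ :: r => upLenAux true r

/-- The sum of side-lengths of the up-pointing triangles of a fern. -/
def Fern.up (F : Fern) : ℕ := upLenAux F.firstUp F.lengths

/-- The sum of side-lengths of the down-pointing triangles of a fern. -/
def Fern.down (F : Fern) : ℕ := upLenAux (!F.firstUp) F.lengths

/-- The image of a fern under 180° rotation. -/
def Fern.rot (F : Fern) : Fern :=
  ⟨F.lengths.reverse, if F.lengths.length % 2 = 1 then !F.firstUp else F.firstUp⟩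

/-- Concatenation of two ferns (the second continuing the alternation of the first). -/
def Fern.cat (F G : Fern) : Fern := ⟨F.lengths ++ G.lengths, F.firstUp⟩

/-- The unit triangles of a chain of triangles of alternating orientations starting
at `p` with the first orientation `o`. -/
def chainSet : ℤ → Bool → List ℕ → Set Tri
  | _, _, [] => ∅
  | p, o, s :: r => triSet p s o ∪ chainSet (p + s) (!o) r

/-- The unit triangles of the ferns `Fs` placed along the axis starting at `p` with
gaps `ds` between consecutive ferns. -/
def fernsSet : ℤ → List Fern → List ℕ → Set Tri
  | _, [], _ => ∅
  | p, F :: Fs, ds => chainSet p F.firstUp F.lengths ∪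
      fernsSet (p + F.total + ds.headI) Fs ds.tail

def totUp (Fs : List Fern) : ℕ := (Fs.map Fern.up).sum
def totDown (Fs : List Fern) : ℕ := (Fs.map Fern.down).sum

/-- The hexagon with ferns removed `R_{x,y}(F₁,…,F_k | d₁,…,d_{k-1})`. -/
def RRegion (x y : ℕ) (Fs : List Fern) (ds : List ℕ) : Set Tri :=
  HRegion (x + y + totUp Fs + totDown Fs) (y + totUp Fs) (y + totDown Fs) ∅ ∅ \
    fernsSet 0 Fs ds

/-- The number of lozenge tilings of `R_{x,y}(F₁,…,F_k | d₁,…,d_{k-1})`. -/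
noncomputable def MR (x y : ℕ) (Fs : List Fern) (ds : List ℕ) : ℕ :=
  M (RRegion x y Fs ds) ∅

/-- The number of centrally symmetric lozenge tilings of
`R_{x,y}(F₁,…,F_k | d₁,…,d_{k-1})` (for a centrally symmetric datum; the center of
the hexagon is the midpoint `(L/2, 0)` of its axis). -/
noncomputable def McR (x y : ℕ) (Fs : List Fern) (ds : List ℕ) : ℕ :=
  Mc ((x + y + totUp Fs + totDown Fs : ℤ), 0) (RRegion x y Fs ds) ∅

/-- The positions (labelled `1,2,…` from the left) of the removed up-pointing unit
triangles just above the axis, for a chain starting at `p` with first orientation `o`. -/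
noncomputable def upRunPos : ℤ → Bool → List ℕ → Finset ℤ
  | _, _, [] => ∅
  | p, true, s :: r => Finset.Icc (p + 1) (p + s) ∪ upRunPos (p + s) false r
  | p, false, s :: r => upRunPos (p + s) true r

/-- The positions of the removed up-pointing unit triangles along the axis for the
ferns `Fs` with gaps `ds`, starting at `p`. -/
noncomputable def upPosAll : ℤ → List Fern → List ℕ → Finset ℤ
  | _, [], _ => ∅
  | p, F :: Fs, ds => upRunPos p F.firstUp F.lengths ∪
      upPosAll (p + F.total + ds.headI) Fs ds.tail

/-- The positions of the removed down-pointing unit triangles along the axis. -/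
noncomputable def downPosAll (p : ℤ) (Fs : List Fern) (ds : List ℕ) : Finset ℤ :=
  upPosAll p (Fs.map (fun F => Fern.mk F.lengths (!F.firstUp))) ds

/-- The unit triangles removed in the generalized dented semihexagon determined by
the maximal runs of the position set `A`: a unit triangle is removed precisely when
the interval of base positions it lies over is contained in `A`. -/
def runRemoved (A : Finset ℤ) : Set Tri :=
  {t | ∀ i ∈ Finset.Icc (t.1 + 1) (t.1 + t.2.1 + (if t.2.2 then 2 else 1)), i ∈ A}

/-- `MS A` : the number of lozenge tilings of the generalized dented semihexagon
`S(e₁, e₂, …)` where `e₁, e₃, …` are the lengths of the maximal runs of `A` and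
`e₂, e₄, …` the gaps between consecutive runs (base `= max A`, height `= |A|`). -/
noncomputable def MS (A : Finset ℤ) : ℕ :=
  M (trapRegion (WithBot.unbotD 0 A.max) A.card \ runRemoved A) ∅

/-- The fern list of `E_{x,y}(F₁,…,F_k | d₁,…,d_{k-1})`:
`F₁,…,F_{k-1}, F_k ∘ F̄_k, F̄_{k-1},…,F̄₁`. -/
def EFerns (Fs : List Fern) : List Fern :=
  Fs.dropLast ++ Fern.cat (Fs.getLastD ⟨[], true⟩) (Fern.rot (Fs.getLastD ⟨[], true⟩)) ::
    (Fs.dropLast.map Fern.rot).reverse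

/-- The gap list of `E_{x,y}` : `d₁,…,d_{k-1},d_{k-1},…,d₁`. -/
def Egaps (ds : List ℕ) : List ℕ := ds ++ ds.reverse

/-- The fern list of `E'_{x,y}(F₁,…,F_k | d₁,…,d_{k-1})` : `F₁,…,F_k,F̄_k,…,F̄₁`. -/
def E'Ferns (Fs : List Fern) : List Fern := Fs ++ (Fs.map Fern.rot).reverse

/-- The gap list of `E'_{x,y}` : `d₁,…,d_{k-1},1,d_{k-1},…,d₁`. -/
def E'gaps (ds : List ℕ) : List ℕ := ds ++ 1 :: ds.reverse

end Shuf

namespace Shuf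

/-! Put `S = (U ∖ {1}) ∪ D̄` and `b = N + 1 - β`. Since `1, α ≤ M < b` and `D̄ ⊆ [N + 1 - M, N]`,
every set in the three ratios is `S` with some of the three distinct points `1, α, b` adjoined,
and adjoining a point `x ∉ T` multiplies `Δ(T)` by `∏_{t ∈ T} |x - t|`. All factors involving
`S` cancel, and the ratios are `(α - 1)(N - β)`, `(α - 1)/(N + 1 - α - β)` and
`(N - β)/(N + 1 - α - β)`, which do not depend on `(U, D)`. -/

lemma Δprod_eq_prod_prod (S : Finset ℤ) :
    Δprod S = ∏ a ∈ S, ∏ b ∈ S, if a < b then b - a else 1 := by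
  rw [Δprod, prod_filter, prod_product]

lemma Δprod_pos (S : Finset ℤ) : 0 < Δprod S :=
  prod_pos fun _ hp => sub_pos.mpr (mem_filter.mp hp).2

lemma Δprod_insert {x : ℤ} {S : Finset ℤ} (hx : x ∉ S) :
    Δprod (insert x S) = Δprod S * ∏ s ∈ S, |x - s| := by
  have hpair : ∀ s ∈ S,
      ((if x < s then s - x else 1) * if s < x then x - s else 1) = |x - s| := by
    intro s hs
    rcases lt_trichotomy x s with h | rfl | h
    · rw [if_pos h, if_neg h.not_gt, mul_one, abs_sub_comm, abs_of_pos (sub_pos.mpr h)]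
    · exact absurd hs hx
    · rw [if_neg h.not_gt, if_pos h, one_mul, abs_of_pos (sub_pos.mpr h)]
  simp only [Δprod_eq_prod_prod, prod_insert hx, lt_irrefl, if_false, one_mul,
    prod_mul_distrib]
  rw [← prod_congr rfl hpair, prod_mul_distrib]
  ring

lemma mem_mir {N x : ℤ} {W : Finset ℤ} : x ∈ mir N W ↔ N + 1 - x ∈ W := by
  simp only [mir, mem_image]
  exact ⟨fun ⟨w, hw, hwx⟩ => by rwa [← hwx, sub_sub_cancel], fun h => ⟨_, h, by ring⟩⟩

lemma mir_insert (N w : ℤ) (W : Finset ℤ) : mir N (insert w W) = insert (N + 1 - w) (mir N W) :=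
  image_insert _ _ _

lemma notMem_mir_of_le {N M : ℕ} (hNM : 2 * M ≤ N) {D : Finset ℤ} (hD : D ⊆ Icc 1 (M : ℤ))
    {x : ℤ} (hx : x ≤ M) : x ∉ mir N D := fun h => by
  have := mem_Icc.mp (hD (mem_mir.mp h))
  omega

section ThreePoints

variable {S : Finset ℤ} {x y z : ℤ}

lemma Δprod_ratio_insert₃ (hx : x ∉ S) (hy : y ∉ S) (hz : z ∉ S)
    (hxy : x ≠ y) (hxz : x ≠ z) (hyz : y ≠ z) :
    ((Δprod S * Δprod (insert z (insert y (insert x S))) : ℤ) : ℚ) /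
        ((Δprod (insert x S) * Δprod (insert z (insert y S)) : ℤ) : ℚ) =
      ((|y - x| * |z - x| : ℤ) : ℚ) := by
  have hyx : y ∉ insert x S := by simp [hxy.symm, hy]
  have hzy : z ∉ insert y S := by simp [hyz.symm, hz]
  have hzyx : z ∉ insert y (insert x S) := by simp [hxz.symm, hyz.symm, hz]
  have hnum : Δprod S * Δprod (insert z (insert y (insert x S))) =
      (|y - x| * |z - x|) * (Δprod (insert x S) * Δprod (insert z (insert y S))) := by
    rw [Δprod_insert hzyx, Δprod_insert hyx, Δprod_insert hzy, Δprod_insert hy]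
    simp only [prod_insert hyx, prod_insert hx, prod_insert hy]
    ring
  rw [hnum, Int.cast_mul, mul_div_cancel_right₀]
  exact_mod_cast (mul_pos (Δprod_pos _) (Δprod_pos _)).ne'

lemma Δprod_ratio_insert₂ (hx : x ∉ S) (hy : y ∉ S) (hz : z ∉ S)
    (hxy : x ≠ y) (hyz : y ≠ z) :
    ((Δprod (insert y (insert x S)) * Δprod (insert z S) : ℤ) : ℚ) /
        ((Δprod (insert x S) * Δprod (insert z (insert y S)) : ℤ) : ℚ) =
      ((|y - x| : ℤ) : ℚ) / ((|z - y| : ℤ) : ℚ) := by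
  have hyx : y ∉ insert x S := by simp [hxy.symm, hy]
  have hzy : z ∉ insert y S := by simp [hyz.symm, hz]
  have hcross : Δprod (insert y (insert x S)) * Δprod (insert z S) * |z - y| =
      |y - x| * (Δprod (insert x S) * Δprod (insert z (insert y S))) := by
    rw [Δprod_insert hyx, Δprod_insert hzy, Δprod_insert hx, Δprod_insert hy, Δprod_insert hz]
    simp only [prod_insert hx, prod_insert hy]
    ring
  rw [div_eq_div_iff (by exact_mod_cast (mul_pos (Δprod_pos _) (Δprod_pos _)).ne')
    (by exact_mod_cast abs_ne_zero.mpr (sub_ne_zero.mpr hyz.symm))]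
  exact_mod_cast hcross

end ThreePoints

lemma Δprod_ratios_of_one_mem {N M : ℕ} (hNM : 2 * M ≤ N) {U D : Finset ℤ}
    (hU : U ⊆ Icc 1 (M : ℤ)) (hD : D ⊆ Icc 1 (M : ℤ)) (h1 : (1 : ℤ) ∈ U ∩ D) {α β : ℤ}
    (hα : α ∈ Icc (2 : ℤ) (M : ℤ) \ (U ∪ D)) (hβ : β ∈ Icc (2 : ℤ) (M : ℤ) \ (U ∪ D)) :
    ((Δprod ((U \ {1}) ∪ mir N D) * Δprod (insert α U ∪ mir N (insert β D)) : ℤ) : ℚ) /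
        ((Δprod (U ∪ mir N D) * Δprod ((insert α U \ {1}) ∪ mir N (insert β D)) : ℤ) : ℚ) =
      ((α - 1) * (N - β) : ℤ) ∧
    ((Δprod (insert α U ∪ mir N D) * Δprod ((U \ {1}) ∪ mir N (insert β D)) : ℤ) : ℚ) /
        ((Δprod (U ∪ mir N D) * Δprod ((insert α U \ {1}) ∪ mir N (insert β D)) : ℤ) : ℚ) =
      ((α - 1 : ℤ) : ℚ) / ((N + 1 - α - β : ℤ) : ℚ) ∧
    ((Δprod (U ∪ mir N (insert β D)) * Δprod ((insert α U \ {1}) ∪ mir N D) : ℤ) : ℚ) /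
        ((Δprod (U ∪ mir N D) * Δprod ((insert α U \ {1}) ∪ mir N (insert β D)) : ℤ) : ℚ) =
      ((N - β : ℤ) : ℚ) / ((N + 1 - α - β : ℤ) : ℚ) := by
  obtain ⟨h1U, h1D⟩ := mem_inter.mp h1
  obtain ⟨hαI, hαUD⟩ := mem_sdiff.mp hα
  obtain ⟨hβI, hβUD⟩ := mem_sdiff.mp hβ
  rw [mem_Icc] at hαI hβI
  obtain ⟨A, hA1, rfl⟩ : ∃ A, 1 ∉ A ∧ insert 1 A = U :=
    ⟨U.erase 1, notMem_erase 1 U, insert_erase h1U⟩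
  have hAM : ∀ a ∈ A, a ≤ (M : ℤ) := fun a ha => (mem_Icc.mp (hU (mem_insert_of_mem ha))).2
  have hβD : β ∉ D := fun h => hβUD (mem_union_right _ h)
  have hA : insert 1 A \ {1} = A := by rw [sdiff_singleton_eq_erase, erase_insert hA1]
  have hαA : insert α (insert 1 A) \ {1} = insert α A := by
    rw [insert_sdiff_of_notMem _ (by simp; omega), hA]
  simp only [hαA, hA, mir_insert, insert_union, union_insert]
  set S := A ∪ mir N D
  set b : ℤ := N + 1 - β with hb
  have h1S : 1 ∉ S := notMem_union.mpr ⟨hA1, notMem_mir_of_le hNM hD (by omega)⟩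
  have hαS : α ∉ S := notMem_union.mpr
    ⟨fun h => hαUD (mem_union_left _ (mem_insert_of_mem h)), notMem_mir_of_le hNM hD hαI.2⟩
  have hbS : b ∉ S := notMem_union.mpr
    ⟨fun h => by have := hAM _ h; omega, by rwa [mem_mir, sub_sub_cancel]⟩
  have h1α : (1 : ℤ) ≠ α := by omega
  have h1b : (1 : ℤ) ≠ b := by omega
  have hαb : α ≠ b := by omega
  have dα1 : |α - 1| = α - 1 := abs_of_pos (by omega)
  have db1 : |b - 1| = N - β := by rw [abs_of_pos] <;> omega
  have dbα : |b - α| = N + 1 - α - β := by rw [abs_of_pos] <;> omega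
  refine ⟨?_, ?_, ?_⟩
  · rw [Δprod_ratio_insert₃ h1S hαS hbS h1α h1b hαb, dα1, db1]
  · rw [Δprod_ratio_insert₂ h1S hαS hbS h1α hαb, dα1, dbα]
  · rw [insert_comm b α, Δprod_ratio_insert₂ h1S hbS hαS h1b hαb.symm, db1, abs_sub_comm, dbα]

theorem stmt11_general (N M : ℕ) (hNM : 2 * M ≤ N)
    (U D U' D' : Finset ℤ)
    (hU : U ⊆ Icc 1 (M : ℤ)) (hD : D ⊆ Icc 1 (M : ℤ))
    (hU' : U' ⊆ Icc 1 (M : ℤ)) (hD' : D' ⊆ Icc 1 (M : ℤ))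
    (hUD : U ∪ D = U' ∪ D') (hI : U ∩ D = U' ∩ D')
    (h1 : (1 : ℤ) ∈ U ∩ D)
    (α β : ℤ) (hα : α ∈ Icc (2 : ℤ) (M : ℤ) \ (U ∪ D)) (hβ : β ∈ Icc (2 : ℤ) (M : ℤ) \ (U ∪ D)) :
    ((Δprod ((U \ {1}) ∪ mir N D) * Δprod (insert α U ∪ mir N (insert β D)) : ℤ) : ℚ) /
        ((Δprod (U ∪ mir N D) * Δprod ((insert α U \ {1}) ∪ mir N (insert β D)) : ℤ) : ℚ) =
      ((Δprod ((U' \ {1}) ∪ mir N D') * Δprod (insert α U' ∪ mir N (insert β D')) : ℤ) : ℚ) /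
        ((Δprod (U' ∪ mir N D') * Δprod ((insert α U' \ {1}) ∪ mir N (insert β D')) : ℤ) : ℚ) ∧
    ((Δprod (insert α U ∪ mir N D) * Δprod ((U \ {1}) ∪ mir N (insert β D)) : ℤ) : ℚ) /
        ((Δprod (U ∪ mir N D) * Δprod ((insert α U \ {1}) ∪ mir N (insert β D)) : ℤ) : ℚ) =
      ((Δprod (insert α U' ∪ mir N D') * Δprod ((U' \ {1}) ∪ mir N (insert β D')) : ℤ) : ℚ) /
        ((Δprod (U' ∪ mir N D') * Δprod ((insert α U' \ {1}) ∪ mir N (insert β D')) : ℤ) : ℚ) ∧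
    ((Δprod (U ∪ mir N (insert β D)) * Δprod ((insert α U \ {1}) ∪ mir N D) : ℤ) : ℚ) /
        ((Δprod (U ∪ mir N D) * Δprod ((insert α U \ {1}) ∪ mir N (insert β D)) : ℤ) : ℚ) =
      ((Δprod (U' ∪ mir N (insert β D')) * Δprod ((insert α U' \ {1}) ∪ mir N D') : ℤ) : ℚ) /
        ((Δprod (U' ∪ mir N D') * Δprod ((insert α U' \ {1}) ∪ mir N (insert β D')) : ℤ) : ℚ) := by
  obtain ⟨r₁, r₂, r₃⟩ := Δprod_ratios_of_one_mem hNM hU hD h1 hα hβ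
  obtain ⟨r₁', r₂', r₃'⟩ :=
    Δprod_ratios_of_one_mem hNM hU' hD' (hI ▸ h1) (hUD ▸ hα) (hUD ▸ hβ)
  exact ⟨r₁.trans r₁'.symm, r₂.trans r₂'.symm, r₃.trans r₃'.symm⟩

/-- Claim 3: the three Δ-ratios in the case `1 ∈ U ∩ D`. -/
theorem stmt11 (N M : ℕ) (hN : 0 < N) (hM : 0 < M) (hNM : 2 * M ≤ N)
    (U D U' D' : Finset ℤ)
    (hU : U ⊆ Icc 1 (M : ℤ)) (hD : D ⊆ Icc 1 (M : ℤ))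
    (hU' : U' ⊆ Icc 1 (M : ℤ)) (hD' : D' ⊆ Icc 1 (M : ℤ))
    (hUD : U ∪ D = U' ∪ D') (hI : U ∩ D = U' ∩ D')
    (h1 : (1 : ℤ) ∈ U ∩ D)
    (α β : ℤ) (hα : α ∈ Icc (2 : ℤ) (M : ℤ) \ (U ∪ D)) (hβ : β ∈ Icc (2 : ℤ) (M : ℤ) \ (U ∪ D)) :
    ((Δprod ((U \ {1}) ∪ mir N D) * Δprod (insert α U ∪ mir N (insert β D)) : ℤ) : ℚ) /
        ((Δprod (U ∪ mir N D) * Δprod ((insert α U \ {1}) ∪ mir N (insert β D)) : ℤ) : ℚ) =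
      ((Δprod ((U' \ {1}) ∪ mir N D') * Δprod (insert α U' ∪ mir N (insert β D')) : ℤ) : ℚ) /
        ((Δprod (U' ∪ mir N D') * Δprod ((insert α U' \ {1}) ∪ mir N (insert β D')) : ℤ) : ℚ) ∧
    ((Δprod (insert α U ∪ mir N D) * Δprod ((U \ {1}) ∪ mir N (insert β D)) : ℤ) : ℚ) /
        ((Δprod (U ∪ mir N D) * Δprod ((insert α U \ {1}) ∪ mir N (insert β D)) : ℤ) : ℚ) =
      ((Δprod (insert α U' ∪ mir N D') * Δprod ((U' \ {1}) ∪ mir N (insert β D')) : ℤ) : ℚ) /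
        ((Δprod (U' ∪ mir N D') * Δprod ((insert α U' \ {1}) ∪ mir N (insert β D')) : ℤ) : ℚ) ∧
    ((Δprod (U ∪ mir N (insert β D)) * Δprod ((insert α U \ {1}) ∪ mir N D) : ℤ) : ℚ) /
        ((Δprod (U ∪ mir N D) * Δprod ((insert α U \ {1}) ∪ mir N (insert β D)) : ℤ) : ℚ) =
      ((Δprod (U' ∪ mir N (insert β D')) * Δprod ((insert α U' \ {1}) ∪ mir N D') : ℤ) : ℚ) /
        ((Δprod (U' ∪ mir N D') * Δprod ((insert α U' \ {1}) ∪ mir N (insert β D')) : ℤ) : ℚ) :=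
  stmt11_general N M hNM U D U' D' hU hD hU' hD' hUD hI h1 α β hα hβ

end Shuf
end

section
/- Let y be a nonnegative integer, b a nonnegative integer, and let U, D, B ⊆ {1,…,⌊N/2⌋} with n=|U∪D|, |B|=b, N=2b+y+2n and B∩(U∪D)=∅. Write u=|U|, d=|D|, m=2n−u−d, D̄={N+1−t : t∈D}, O := (U∪D∪B) ∪ {N+1−w : w ∈ U∪D∪B} and O^c := {1,…,N}∖O. Then M_c(CS_{2b,y}(U;D;B)) = M(T_{y+u+d, 2b+m}(O^c ∪ U ∪ D̄)), i.e. the number of centrally symmetric lozenge tilings of CS_{2b,y}(U;D;B) equals the number of lozenge tilings of the dented semihexagon with north side 2b+m, slanted sides y+u+d, base N, and dents at the positions of O^c ∪ U ∪ D̄. -/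
open Finset

/-!
The upper half of `CS_{2b,y}(U; D; B)` has `y + u + d` rows: as many as the positions of `O^c`
plus the `u + d` dents `U ∪ D̄` on its base. Every down-triangle of the upper half is matched
inside the upper half, so counting unit triangles shows that in every tiling exactly the
up-triangles above the positions of `O^c` are matched across the axis, by vertical lozenges.
Hence a centrally symmetric tiling is determined by its restriction to the upper half minus these
triangles, which is a tiling of `T_{y+u+d, 2b+m}(O^c ∪ U ∪ D̄)`; conversely every tiling of this
semihexagon extends, by its rotated copy and the vertical lozenges, to a centrally symmetric
tiling.
-/

namespace Shuf

section Lattice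

lemma rot_rot (c : ℤ × ℤ) (t : Tri) : rot c (rot c t) = t := by
  obtain ⟨a, j, o⟩ := t
  simp only [rot, Bool.not_not, Prod.mk.injEq, and_true]
  omega

lemma adjUD_rot (c : ℤ × ℤ) (t s : Tri) : adjUD (rot c t) (rot c s) ↔ adjUD s t := by
  obtain ⟨a, j, o⟩ := t
  obtain ⟨a', j', o'⟩ := s
  simp only [adjUD, rot, Bool.not_eq_false', Bool.not_eq_true']
  constructor <;> rintro ⟨h1, h2, h3⟩ <;> exact ⟨h2, h1, by omega⟩

lemma adj_rot (c : ℤ × ℤ) (t s : Tri) : adj (rot c t) (rot c s) ↔ adj t s := by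
  rw [adj, adj, adjUD_rot, adjUD_rot, or_comm]

lemma adj_up_iff {a j : ℤ} {s : Tri} :
    adj (a, j, false) s ↔ s = (a, j, true) ∨ s = (a - 1, j, true) ∨ s = (a, j - 1, true) := by
  obtain ⟨a', j', o'⟩ := s
  simp only [adj, adjUD, Prod.mk.injEq]
  grind

lemma adj_down_iff {a j : ℤ} {s : Tri} :
    adj (a, j, true) s ↔
      s = (a, j, false) ∨ s = (a + 1, j, false) ∨ s = (a, j + 1, false) := by
  obtain ⟨a', j', o'⟩ := s
  simp only [adj, adjUD, Prod.mk.injEq]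
  grind

end Lattice

section Mirror

lemma card_mir (N : ℤ) (W : Finset ℤ) : (mir N W).card = W.card :=
  Finset.card_image_of_injective _ fun _ _ h => by simpa using h

lemma mir_union (N : ℤ) (V W : Finset ℤ) : mir N (V ∪ W) = mir N V ∪ mir N W :=
  Finset.image_union _ _

lemma mir_mir (N : ℤ) (W : Finset ℤ) : mir N (mir N W) = W := by
  ext x
  rw [mem_mir, mem_mir, sub_sub_cancel]

lemma mir_union_mir (N : ℤ) (V W : Finset ℤ) : mir N (V ∪ mir N W) = W ∪ mir N V := by
  rw [mir_union, mir_mir, Finset.union_comm]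

variable {N M : ℤ} {V W : Finset ℤ}

lemma disjoint_mir (hM : 2 * M ≤ N) (hV : V ⊆ Icc 1 M) (hW : W ⊆ Icc 1 M) :
    Disjoint V (mir N W) :=
  Finset.disjoint_left.2 fun x hxV hxW => by
    have h1 := Finset.mem_Icc.1 (hV hxV)
    have h2 := Finset.mem_Icc.1 (hW (mem_mir.1 hxW))
    omega

lemma card_union_mir (hM : 2 * M ≤ N) (hV : V ⊆ Icc 1 M) (hW : W ⊆ Icc 1 M) :
    (V ∪ mir N W).card = V.card + W.card := by
  rw [Finset.card_union_of_disjoint (disjoint_mir hM hV hW), card_mir]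

lemma union_mir_subset_Icc (hM : 2 * M ≤ N) (hV : V ⊆ Icc 1 M) (hW : W ⊆ Icc 1 M) :
    V ∪ mir N W ⊆ Icc 1 N := by
  refine Finset.union_subset (fun x hx => ?_) fun x hx => ?_
  · have := Finset.mem_Icc.1 (hV hx)
    exact Finset.mem_Icc.2 ⟨by omega, by omega⟩
  · have := Finset.mem_Icc.1 (hW (mem_mir.1 hx))
    exact Finset.mem_Icc.2 ⟨by omega, by omega⟩

lemma union_mir_union_mir_union_mir (N : ℤ) (U D B : Finset ℤ) :
    U ∪ mir N D ∪ (D ∪ mir N U) ∪ (B ∪ mir N B) = U ∪ D ∪ B ∪ mir N (U ∪ D ∪ B) := by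
  rw [mir_union, mir_union]
  ext x
  simp only [Finset.mem_union]
  tauto

end Mirror

section Membership

variable {L hu hd a j : ℤ} {U D : Set ℤ}

lemma mem_HRegion_up_of_nonneg (hj : 0 ≤ j) :
    ((a, j, false) : Tri) ∈ HRegion L hu hd U D ↔
      j < hu ∧ 0 ≤ a ∧ a + j ≤ L - 1 ∧ (j = 0 → a + 1 ∉ U) := by
  simp only [HRegion, Set.mem_ofPred_eq]
  grind

lemma mem_HRegion_down_of_nonneg (hj : 0 ≤ j) :
    ((a, j, true) : Tri) ∈ HRegion L hu hd U D ↔ j < hu ∧ 0 ≤ a ∧ a + j ≤ L - 2 := by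
  simp only [HRegion, Set.mem_ofPred_eq]
  grind

lemma mem_HRegion_up_of_neg (hj : j < 0) :
    ((a, j, false) : Tri) ∈ HRegion L hu hd U D ↔ -hd ≤ j ∧ -j ≤ a ∧ a ≤ L - 1 := by
  simp only [HRegion, Set.mem_ofPred_eq]
  grind

lemma mem_HRegion_down_of_neg (hj : j < 0) :
    ((a, j, true) : Tri) ∈ HRegion L hu hd U D ↔
      -hd ≤ j ∧ -j - 1 ≤ a ∧ a ≤ L - 1 ∧ (j = -1 → a + 1 ∉ D) := by
  simp only [HRegion, Set.mem_ofPred_eq]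
  grind

lemma mem_TRegion_up {S : Set ℤ} :
    ((a, j, false) : Tri) ∈ TRegion hu hd S ↔
      0 ≤ j ∧ j < hu ∧ 0 ≤ a ∧ a + j ≤ hu + hd - 1 ∧ (j = 0 → a + 1 ∉ S) := by
  simp [TRegion]

lemma mem_TRegion_down {S : Set ℤ} :
    ((a, j, true) : Tri) ∈ TRegion hu hd S ↔
      0 ≤ j ∧ j < hu ∧ 0 ≤ a ∧ a + j ≤ hu + hd - 2 := by
  simp [TRegion]

lemma row_nonneg_of_mem_TRegion {S : Set ℤ} {t : Tri} (ht : t ∈ TRegion hu hd S) :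
    0 ≤ t.2.1 := by
  rcases ht with ⟨-, h, -⟩ | ⟨-, h, -⟩ <;> exact h

end Membership

lemma sdiff_image_eq_of_card_eq {α β : Type*} [DecidableEq β] {f : α → β} {s : Finset α}
    {t S : Finset β} (hmaps : ∀ x ∈ s, f x ∈ t) (hinj : Set.InjOn f s)
    (hsub : t \ s.image f ⊆ S) (hcard : t.card = s.card + S.card) : t \ s.image f = S := by
  refine Finset.eq_of_subset_of_card_le hsub ?_
  rw [Finset.card_sdiff_of_subset (Finset.image_subset_iff.2 hmaps),
    Finset.card_image_of_injOn hinj]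
  omega

-- The unit triangles just above and just below the `i`-th unit segment of the axis.
def axisUp (i : ℤ) : Tri := (i - 1, 0, false)

def axisDown (i : ℤ) : Tri := (i - 1, -1, true)

/-- The set `O^c` of the paper: the positions of the axis carrying neither a dent nor a
barrier. -/
noncomputable def freePos (L : ℤ) (U D B : Finset ℤ) : Finset ℤ := Icc 1 L \ (U ∪ D ∪ B)

lemma mem_freePos {L i : ℤ} {U D B : Finset ℤ} :
    i ∈ freePos L U D B ↔ 1 ≤ i ∧ i ≤ L ∧ i ∉ U ∧ i ∉ D ∧ i ∉ B := by
  simp only [freePos, Finset.mem_sdiff, Finset.mem_Icc, Finset.mem_union]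
  tauto

lemma mem_HBar {B : Set ℤ} {p q : Tri} :
    (p, q) ∈ HBar B ↔
      ∃ i ∈ B, (p = axisUp i ∧ q = axisDown i) ∨ (p = axisDown i ∧ q = axisUp i) := by
  simp only [HBar, Set.mem_ofPred_eq, Prod.mk.injEq, axisUp, axisDown]

lemma row_add_row_of_mem_HBar {B : Set ℤ} {p q : Tri} (hpq : (p, q) ∈ HBar B) :
    p.2.1 + q.2.1 = -1 := by
  obtain ⟨i, -, ⟨rfl, rfl⟩ | ⟨rfl, rfl⟩⟩ := mem_HBar.1 hpq <;> rfl

lemma notMem_HBar_of_sameSide {B : Set ℤ} {p q : Tri} (hpq : 0 ≤ p.2.1 ↔ 0 ≤ q.2.1) :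
    (p, q) ∉ HBar B := fun hmem => by
  have := row_add_row_of_mem_HBar hmem
  omega

lemma axis_notMem_HBar {B : Finset ℤ} {i : ℤ} (hi : i ∉ B) :
    (axisUp i, axisDown i) ∉ HBar ↑B ∧ (axisDown i, axisUp i) ∉ HBar ↑B := by
  constructor <;> rintro hmem <;> obtain ⟨k, hk, hc⟩ := mem_HBar.1 hmem <;>
    simp only [axisUp, axisDown, Prod.mk.injEq] at hc <;>
    grind

lemma IsTiling.apply_notMem_of_notMem_image {R : Set Tri} {Bar : Set (Tri × Tri)} {f : Tri → Tri}
    (hf : IsTiling R Bar f) {s : Finset Tri} {t : Tri} (ht : t ∈ R)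
    (hts : t ∉ s.image f) : f t ∉ s :=
  fun hft => hts (Finset.mem_image.2 ⟨f t, hft, (hf.2 t ht).2.2.1⟩)

section Forcing

variable {L hu hd : ℤ} {U D B : Finset ℤ} {f : Tri → Tri}

open scoped Classical in
noncomputable def trapTris (L h : ℤ) (o : Bool) : Finset Tri :=
  (Icc 0 L ×ˢ Icc 0 h ×ˢ {o}).filter (· ∈ trapRegion L h)

lemma mem_trapTris {L h : ℤ} {o : Bool} {t : Tri} :
    t ∈ trapTris L h o ↔
      t.2.2 = o ∧ 0 ≤ t.2.1 ∧ t.2.1 < h ∧ 0 ≤ t.1 ∧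
        t.1 + t.2.1 ≤ L - (if o then 2 else 1) := by
  simp only [trapTris, trapRegion, Set.mem_ofPred_eq]
  grind

lemma row_nonneg_of_mem_trapTris {o : Bool} {t : Tri} (ht : t ∈ trapTris L hu o) : 0 ≤ t.2.1 :=
  (mem_trapTris.1 ht).2.1

/-- Shifting one unit to the right matches the down-triangles of a trapezoid with its up-triangles
off the west edge. -/
lemma card_trapTris_false (h0 : 0 ≤ hu) (hL : hu ≤ L) :
    ((trapTris L hu false).card : ℤ) = (trapTris L hu true).card + hu := by
  have hedge : ((trapTris L hu false).filter (fun t => t.1 = 0)).card = (Icc 0 (hu - 1)).card := by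
    refine Finset.card_nbij' (fun t => t.2.1) (fun j => (0, j, false)) ?_ ?_ ?_ ?_ <;>
      intro t <;>
      simp only [Finset.coe_filter, Finset.coe_Icc, Set.mem_Icc, Set.mem_ofPred_eq,
        mem_trapTris] <;>
      grind
  have hrest :
      ((trapTris L hu false).filter (fun t => t.1 ≠ 0)).card = (trapTris L hu true).card := by
    refine Finset.card_nbij' (fun t => (t.1 - 1, t.2.1, true)) (fun t => (t.1 + 1, t.2.1, false))
      ?_ ?_ ?_ ?_ <;> intro t <;>
      simp only [Finset.coe_filter, Finset.mem_coe, Set.mem_ofPred_eq, mem_trapTris] <;> grind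
  have := Finset.card_filter_add_card_filter_not (s := trapTris L hu false) (fun t => t.1 = 0)
  rw [hedge, hrest, Int.card_Icc] at this
  omega

lemma mem_trapTris_false_sdiff_iff {a j : ℤ} :
    ((a, j, false) : Tri) ∈ trapTris L hu false \ U.image axisUp ↔
      ((a, j, false) : Tri) ∈ HRegion L hu hd ↑U ↑D ∧ 0 ≤ j := by
  by_cases hj : 0 ≤ j
  · rw [mem_HRegion_up_of_nonneg hj]
    grind [mem_trapTris, axisUp]
  · simp [mem_trapTris, hj]

lemma mem_trapTris_true_iff {a j : ℤ} :
    ((a, j, true) : Tri) ∈ trapTris L hu true ↔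
      ((a, j, true) : Tri) ∈ HRegion L hu hd ↑U ↑D ∧ 0 ≤ j := by
  by_cases hj : 0 ≤ j
  · rw [mem_HRegion_down_of_nonneg hj]
    grind [mem_trapTris]
  · simp [mem_trapTris, hj]

lemma mem_HRegion_of_mem_trapTris_true {t : Tri} (ht : t ∈ trapTris L hu true) :
    t ∈ HRegion L hu hd ↑U ↑D := by
  obtain ⟨a, j, o⟩ := t
  obtain rfl : o = true := (mem_trapTris.1 ht).1
  exact (mem_trapTris_true_iff.1 ht).1

lemma IsTiling.mem_freePos_of_crossing (hf : IsTiling (HRegion L hu hd ↑U ↑D) (HBar ↑B) f)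
    {i : ℤ} (ht : axisUp i ∈ HRegion L hu hd ↑U ↑D) (hft : f (axisUp i) = axisDown i) :
    i ∈ freePos L U D B := by
  obtain ⟨hfH, -, -, hbar, -⟩ := hf.2 _ ht
  rw [hft, axisDown, mem_HRegion_down_of_neg (by norm_num)] at hfH
  rw [hft] at hbar
  rw [axisUp, mem_HRegion_up_of_nonneg le_rfl] at ht
  simp only [sub_add_cancel, Finset.mem_coe, forall_const] at ht hfH
  exact mem_freePos.2 ⟨by omega, by omega, ht.2.2.2, hfH.2.2.2,
    fun hB => hbar (mem_HBar.2 ⟨i, hB, Or.inl ⟨rfl, rfl⟩⟩)⟩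

lemma IsTiling.apply_up_of_nonneg (hf : IsTiling (HRegion L hu hd ↑U ↑D) (HBar ↑B) f)
    {a j : ℤ} (ht : ((a, j, false) : Tri) ∈ HRegion L hu hd ↑U ↑D) (hj : 0 ≤ j) :
    f (a, j, false) ∈ trapTris L hu true ∨
      (a, j, false) = axisUp (a + 1) ∧ f (a, j, false) = axisDown (a + 1) := by
  obtain ⟨hfH, hadj, -⟩ := hf.2 _ ht
  rcases adj_up_iff.1 hadj with h | h | h <;> rw [h] at hfH ⊢
  · exact Or.inl (mem_trapTris_true_iff.2 ⟨hfH, hj⟩)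
  · exact Or.inl (mem_trapTris_true_iff.2 ⟨hfH, hj⟩)
  · by_cases hj1 : 0 ≤ j - 1
    · exact Or.inl (mem_trapTris_true_iff.2 ⟨hfH, hj1⟩)
    · obtain rfl : j = 0 := by omega
      right
      simp [axisUp, axisDown]

lemma IsTiling.apply_down_of_nonneg (hf : IsTiling (HRegion L hu hd ↑U ↑D) (HBar ↑B) f)
    {a j : ℤ} (ht : ((a, j, true) : Tri) ∈ HRegion L hu hd ↑U ↑D) (hj : 0 ≤ j) :
    f (a, j, true) ∈ trapTris L hu false \ U.image axisUp := by
  obtain ⟨hfH, hadj, -⟩ := hf.2 _ ht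
  rcases adj_down_iff.1 hadj with h | h | h <;> rw [h] at hfH ⊢ <;>
    exact mem_trapTris_false_sdiff_iff.2 ⟨hfH, by omega⟩

lemma card_freePos_add_card_le (hL : 0 ≤ L) (hUL : U ⊆ Icc 1 L) :
    (freePos L U D B).card + U.card ≤ L := by
  have hsub : freePos L U D B ∪ U ⊆ Icc 1 L :=
    Finset.union_subset
      (fun i hi => Finset.mem_Icc.2 ⟨(mem_freePos.1 hi).1, (mem_freePos.1 hi).2.1⟩) hUL
  have hdisj : Disjoint (freePos L U D B) U :=
    Finset.disjoint_left.2 fun i hi => (mem_freePos.1 hi).2.2.1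
  have := Finset.card_le_card hsub
  rw [Finset.card_union_of_disjoint hdisj, Int.card_Icc] at this
  omega

lemma card_trapTris_false_sdiff (hUL : U ⊆ Icc 1 L) (hbal : hu = (freePos L U D B).card + U.card)
    (hL : 0 ≤ L) :
    (trapTris L hu false \ U.image axisUp).card =
      (trapTris L hu true).card + ((freePos L U D B).image axisUp).card := by
  have hle := card_freePos_add_card_le hL hUL (D := D) (B := B)
  have hdent : U.image axisUp ⊆ trapTris L hu false := by
    intro t ht
    obtain ⟨k, hk, rfl⟩ := Finset.mem_image.1 ht
    have hk' := Finset.mem_Icc.1 (hUL hk)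
    have hU : 0 < U.card := Finset.card_pos.2 ⟨k, hk⟩
    simp only [axisUp, mem_trapTris, Bool.false_eq_true, if_false, true_and]
    omega
  have hinj : Function.Injective axisUp := fun x y h => by simpa [axisUp] using h
  have hUle := Finset.card_le_card hdent
  have htrap : ((trapTris L hu false).card : ℤ) = (trapTris L hu true).card + hu :=
    card_trapTris_false (by omega) (by omega)
  rw [Finset.card_image_of_injective _ hinj] at hUle
  rw [Finset.card_sdiff_of_subset hdent, Finset.card_image_of_injective _ hinj,
    Finset.card_image_of_injective _ hinj]
  omega

lemma IsTiling.sdiff_image_subset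
    (hf : IsTiling (HRegion L hu hd ↑U ↑D) (HBar ↑B) f) :
    (trapTris L hu false \ U.image axisUp) \ (trapTris L hu true).image f ⊆
      (freePos L U D B).image axisUp := by
  rintro ⟨a, j, o⟩ ht
  obtain ⟨htUp, htf⟩ := Finset.mem_sdiff.1 ht
  obtain rfl : o = false := (mem_trapTris.1 (Finset.mem_sdiff.1 htUp).1).1
  obtain ⟨htH, hj⟩ := mem_trapTris_false_sdiff_iff.1 htUp
  rcases hf.apply_up_of_nonneg htH hj with hDn | ⟨heq, hcross⟩
  · exact absurd hDn (hf.apply_notMem_of_notMem_image htH htf)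
  · rw [heq] at htH hcross ⊢
    exact Finset.mem_image_of_mem _ (hf.mem_freePos_of_crossing htH hcross)

/-- Down-triangles of the upper half are matched injectively to its up-triangles; the up-triangles
left over are as many as the free positions and can only be matched across the axis at free
positions, so they are exactly the triangles above the free positions. -/
theorem IsTiling.apply_axisUp_of_mem_freePos
    (hf : IsTiling (HRegion L hu hd ↑U ↑D) (HBar ↑B) f) (hUL : U ⊆ Icc 1 L)
    (hbal : hu = (freePos L U D B).card + U.card) {i : ℤ} (hi : i ∈ freePos L U D B) :
    f (axisUp i) = axisDown i := by
  have hmaps : ∀ s ∈ trapTris L hu true, f s ∈ trapTris L hu false \ U.image axisUp := by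
    rintro ⟨a, j, o⟩ hs
    obtain rfl : o = true := (mem_trapTris.1 hs).1
    obtain ⟨hsH, hj⟩ := (mem_trapTris_true_iff (hd := hd) (U := U) (D := D)).1 hs
    exact hf.apply_down_of_nonneg hsH hj
  have hinv : ∀ s ∈ trapTris L hu true, f (f s) = s := fun s hs =>
    (hf.2 s (mem_HRegion_of_mem_trapTris_true hs)).2.2.1
  have hinj : Set.InjOn f (trapTris L hu true) := fun s hs s' hs' h => by
    rw [← hinv s hs, h, hinv s' hs']
  have hL : 0 ≤ L := by linarith [(mem_freePos.1 hi).1, (mem_freePos.1 hi).2.1]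
  have hcard := card_trapTris_false_sdiff hUL hbal hL
  have hiUp := sdiff_image_eq_of_card_eq hmaps hinj hf.sdiff_image_subset hcard ▸
    Finset.mem_image_of_mem axisUp hi
  obtain ⟨hiUp', hif⟩ := Finset.mem_sdiff.1 hiUp
  obtain ⟨hiH, -⟩ := mem_trapTris_false_sdiff_iff.1 hiUp'
  rcases hf.apply_up_of_nonneg hiH le_rfl with hDn | ⟨-, hcross⟩
  · exact absurd hDn (hf.apply_notMem_of_notMem_image hiH hif)
  · simpa [axisUp] using hcross

end Forcing

section Glue

variable {c : ℤ × ℤ} {R T : Set Tri} {g : Tri → Tri} {t : Tri}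

theorem IsTiling.piecewise {Bar : Set (Tri × Tri)} {f : Tri → Tri} [∀ t, Decidable (t ∈ T)]
    (hf : IsTiling R Bar f) (hTR : T ⊆ R) (hmaps : ∀ t ∈ T, f t ∈ T) :
    IsTiling T ∅ (T.piecewise f id) := by
  refine ⟨fun t ht => T.piecewise_eq_of_notMem _ _ ht, fun t ht => ?_⟩
  obtain ⟨-, hadj, hff, -⟩ := hf.2 t (hTR ht)
  rw [T.piecewise_eq_of_mem _ _ ht, T.piecewise_eq_of_mem _ _ (hmaps t ht)]
  exact ⟨hmaps t ht, hadj, hff, Set.notMem_empty _, Set.notMem_empty _⟩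

def axisFlip (t : Tri) : Tri := (t.1, if t.2.2 then 0 else -1, !t.2.2)

open scoped Classical in
/-- Extends a tiling `g` of the half `T` of `R` to a centrally symmetric tiling of `R`. -/
noncomputable def symmGlue (c : ℤ × ℤ) (R T : Set Tri) (g : Tri → Tri) (t : Tri) : Tri :=
  if t ∈ T then g t
  else if rot c t ∈ T then rot c (g (rot c t))
  else if t ∈ R then axisFlip t
  else t

lemma symmGlue_of_mem (ht : t ∈ T) : symmGlue c R T g t = g t := by
  simp [symmGlue, ht]

lemma symmGlue_of_rot_mem (ht : t ∉ T) (hrt : rot c t ∈ T) :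
    symmGlue c R T g t = rot c (g (rot c t)) := by
  simp [symmGlue, ht, hrt]

lemma symmGlue_of_notMem (ht : t ∉ T) (hrt : rot c t ∉ T) (htR : t ∈ R) :
    symmGlue c R T g t = axisFlip t := by
  simp [symmGlue, ht, hrt, htR]

lemma symmGlue_of_notMem_of_notMem (ht : t ∉ T) (hrt : rot c t ∉ T) (htR : t ∉ R) :
    symmGlue c R T g t = t := by
  simp [symmGlue, ht, hrt, htR]

lemma piecewise_symmGlue [∀ t, Decidable (t ∈ T)]
    (hg : ∀ t ∉ T, g t = t) : T.piecewise (symmGlue c R T g) id = g := by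
  funext t
  by_cases ht : t ∈ T
  · rw [T.piecewise_eq_of_mem _ _ ht, symmGlue_of_mem ht]
  · rw [T.piecewise_eq_of_notMem _ _ ht, hg t ht, id]

end Glue

section Symmetric

variable {L h : ℤ} {U D B : Finset ℤ} {g : Tri → Tri}

local notation "ℋ" => HRegion L h h (U : Set ℤ) (D : Set ℤ)

local notation "𝒯" => TRegion h (L - h) ((freePos L U D B ∪ U : Finset ℤ) : Set ℤ)

lemma rot_axisUp (i : ℤ) : rot (L, 0) (axisUp i) = axisDown (L + 1 - i) := by
  simp only [rot, axisUp, axisDown, Bool.not_false, Prod.mk.injEq, and_true]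
  omega

lemma rot_axisDown (i : ℤ) : rot (L, 0) (axisDown i) = axisUp (L + 1 - i) := by
  simp only [rot, axisUp, axisDown, Bool.not_true, Prod.mk.injEq, and_true]
  omega

lemma rot_mem_HRegion (hD : mir L U = D) {t : Tri} (ht : t ∈ ℋ) : rot (L, 0) t ∈ ℋ := by
  subst hD
  obtain ⟨a, j, o⟩ := t
  simp only [HRegion, rot, Set.mem_ofPred_eq, Finset.mem_coe, mem_mir] at ht ⊢
  grind

lemma rot_mem_HRegion_iff (hD : mir L U = D) {t : Tri} : rot (L, 0) t ∈ ℋ ↔ t ∈ ℋ :=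
  ⟨fun ht => rot_rot (L, 0) t ▸ rot_mem_HRegion hD ht, rot_mem_HRegion hD⟩

lemma TRegion_subset_HRegion {hd : ℤ} {S : Finset ℤ} :
    TRegion h (L - h) ↑(S ∪ U) ⊆ HRegion L h hd ↑U ↑D := by
  rintro ⟨a, j, o⟩ ht
  simp only [TRegion, HRegion, Set.mem_ofPred_eq, Finset.mem_coe, Finset.mem_union] at ht ⊢
  grind

lemma rot_notMem_TRegion {a b a' b' : ℤ} {S S' : Set ℤ} {t : Tri} (ht : t ∈ TRegion a b S) :
    rot (L, 0) t ∉ TRegion a' b' S' := fun hrot => by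
  have := row_nonneg_of_mem_TRegion hrot
  have := row_nonneg_of_mem_TRegion ht
  simp only [rot] at *
  omega

lemma axisUp_notMem_TRegion {S : Finset ℤ} {i : ℤ} (hi : i ∈ S) :
    axisUp i ∉ TRegion h (L - h) ↑(S ∪ U) := by
  simp [axisUp, mem_TRegion_up, hi]

lemma axisDown_notMem_TRegion {a b : ℤ} {S : Set ℤ} {i : ℤ} : axisDown i ∉ TRegion a b S :=
  fun hi => by simpa [axisDown] using row_nonneg_of_mem_TRegion hi

lemma mir_mem_freePos (hD : mir L U = D) (hB : mir L B = B) {i : ℤ}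
    (hi : i ∈ freePos L U D B) : L + 1 - i ∈ freePos L U D B := by
  subst hD
  simp only [mem_freePos, mem_mir, sub_sub_cancel] at hi ⊢
  refine ⟨by omega, by omega, hi.2.2.2.1, hi.2.2.1, ?_⟩
  rw [← hB, mem_mir, sub_sub_cancel]
  exact hi.2.2.2.2

lemma pos_of_mem_freePos (hbal : h = (freePos L U D B).card + U.card) {i : ℤ}
    (hi : i ∈ freePos L U D B) : 0 < h := by
  have := Finset.card_pos.2 ⟨i, hi⟩
  omega

lemma axisUp_mem_HRegion {hd : ℤ} (hh : 0 < h) {i : ℤ} (hi : i ∈ freePos L U D B) :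
    axisUp i ∈ HRegion L h hd ↑U ↑D := by
  have := mem_freePos.1 hi
  rw [axisUp, mem_HRegion_up_of_nonneg le_rfl]
  simp only [sub_add_cancel, Finset.mem_coe]
  exact ⟨hh, by omega, by omega, fun _ => this.2.2.1⟩

lemma axisDown_mem_HRegion {hu : ℤ} (hh : 0 < h) {i : ℤ} (hi : i ∈ freePos L U D B) :
    axisDown i ∈ HRegion L hu h ↑U ↑D := by
  have := mem_freePos.1 hi
  rw [axisDown, mem_HRegion_down_of_neg (by norm_num)]
  simp only [sub_add_cancel, Finset.mem_coe]
  exact ⟨by omega, by omega, by omega, fun _ => this.2.2.2.1⟩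

lemma mem_TRegion_of_mem_HRegion {hd : ℤ} {t : Tri} (ht : t ∈ HRegion L h hd ↑U ↑D)
    (hrow : 0 ≤ t.2.1) (hfree : ∀ i ∈ freePos L U D B, t ≠ axisUp i) :
    t ∈ 𝒯 := by
  obtain ⟨a, j, o | o⟩ := t <;> dsimp only at hrow
  · rw [mem_HRegion_up_of_nonneg hrow] at ht
    rw [mem_TRegion_up]
    refine ⟨hrow, ht.1, ht.2.1, by omega, fun hj hmem => ?_⟩
    rcases Finset.mem_union.1 hmem with hfr | hU
    · exact hfree _ hfr (by simp [axisUp, hj])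
    · exact ht.2.2.2 hj hU
  · rw [mem_HRegion_down_of_nonneg hrow] at ht
    rw [mem_TRegion_down]
    exact ⟨hrow, ht.1, ht.2.1, by omega⟩

lemma exists_axis_of_notMem_TRegion (hD : mir L U = D) (hB : mir L B = B) {t : Tri}
    (ht : t ∈ ℋ) (hT : t ∉ 𝒯) (hrT : rot (L, 0) t ∉ 𝒯) :
    ∃ i ∈ freePos L U D B, t = axisUp i ∨ t = axisDown i := by
  obtain ⟨a, j, o⟩ := t
  have hrot : rot (L, 0) (a, j, o) = (L - a - 1, -j - 1, !o) := by simp [rot]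
  rw [hrot] at hrT
  cases o
  · by_cases hj : 0 ≤ j
    · rw [mem_HRegion_up_of_nonneg hj] at ht
      rw [mem_TRegion_up] at hT
      simp only [Finset.mem_coe] at ht hT
      obtain ⟨rfl, hmem⟩ : j = 0 ∧ a + 1 ∈ freePos L U D B ∪ U := by
        by_contra hc
        exact hT ⟨hj, ht.1, ht.2.1, by omega, fun hj0 hmem => hc ⟨hj0, hmem⟩⟩
      refine ⟨a + 1, (Finset.mem_union.1 hmem).resolve_right (ht.2.2.2 rfl), Or.inl ?_⟩
      simp [axisUp]
    · rw [mem_HRegion_up_of_neg (by omega)] at ht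
      rw [Bool.not_false, mem_TRegion_down] at hrT
      omega
  · by_cases hj : 0 ≤ j
    · rw [mem_HRegion_down_of_nonneg hj] at ht
      rw [mem_TRegion_down] at hT
      omega
    · rw [mem_HRegion_down_of_neg (by omega)] at ht
      rw [Bool.not_true, mem_TRegion_up] at hrT
      simp only [Finset.mem_coe] at ht hrT
      obtain ⟨rfl, hmem⟩ : j = -1 ∧ L - a - 1 + 1 ∈ freePos L U D B ∪ U := by
        by_contra hc
        exact hrT ⟨by omega, by omega, by omega, by omega, fun _ hm => hc ⟨by omega, hm⟩⟩
      have hmir : L + 1 - (L - a - 1 + 1) = a + 1 := by ring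
      rcases Finset.mem_union.1 hmem with hfree | hU
      · refine ⟨a + 1, hmir ▸ mir_mem_freePos hD hB hfree, Or.inr ?_⟩
        simp [axisDown]
      · refine absurd ?_ (ht.2.2.2 rfl)
        rw [← hD, mem_mir]
        convert hU using 1
        ring

theorem IsTiling.mapsTo_TRegion {f : Tri → Tri} (hf : IsTiling ℋ (HBar ↑B) f)
    (hUL : U ⊆ Icc 1 L) (hbal : h = (freePos L U D B).card + U.card) {t : Tri} (hT : t ∈ 𝒯) :
    f t ∈ 𝒯 := by
  have htH : t ∈ ℋ := TRegion_subset_HRegion hT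
  obtain ⟨hfH, hadj, hff, -⟩ := hf.2 t htH
  refine mem_TRegion_of_mem_HRegion hfH ?_ fun i hi he => ?_
  · obtain ⟨a, j, o | o⟩ := t
    · rcases hf.apply_up_of_nonneg htH (row_nonneg_of_mem_TRegion hT) with hDn | ⟨heq, hcross⟩
      · exact row_nonneg_of_mem_trapTris hDn
      · rw [heq] at hT htH hcross
        exact absurd hT (axisUp_notMem_TRegion (hf.mem_freePos_of_crossing htH hcross))
    · have hj : 0 ≤ j := row_nonneg_of_mem_TRegion hT
      rcases adj_down_iff.1 hadj with e | e | e <;> rw [e] <;> dsimp only <;> omega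
  · have hcross := hf.apply_axisUp_of_mem_freePos hUL hbal hi
    rw [← he, hff] at hcross
    exact axisDown_notMem_TRegion (hcross ▸ hT)

lemma symmGlue_axisUp (hbal : h = (freePos L U D B).card + U.card) {i : ℤ}
    (hi : i ∈ freePos L U D B) : symmGlue (L, 0) ℋ 𝒯 g (axisUp i) = axisDown i := by
  rw [symmGlue_of_notMem (axisUp_notMem_TRegion hi)
    (by rw [rot_axisUp]; exact axisDown_notMem_TRegion)
    (axisUp_mem_HRegion (pos_of_mem_freePos hbal hi) hi)]
  simp [axisFlip, axisUp, axisDown]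

lemma symmGlue_axisDown (hD : mir L U = D) (hB : mir L B = B)
    (hbal : h = (freePos L U D B).card + U.card) {i : ℤ} (hi : i ∈ freePos L U D B) :
    symmGlue (L, 0) ℋ 𝒯 g (axisDown i) = axisUp i := by
  rw [symmGlue_of_notMem axisDown_notMem_TRegion
    (by rw [rot_axisDown]; exact axisUp_notMem_TRegion (mir_mem_freePos hD hB hi))
    (axisDown_mem_HRegion (pos_of_mem_freePos hbal hi) hi)]
  simp [axisFlip, axisUp, axisDown]

lemma symmGlue_rot (hD : mir L U = D) (t : Tri) :
    symmGlue (L, 0) ℋ 𝒯 g (rot (L, 0) t) = rot (L, 0) (symmGlue (L, 0) ℋ 𝒯 g t) := by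
  by_cases h1 : t ∈ 𝒯
  · rw [symmGlue_of_mem h1, symmGlue_of_rot_mem (rot_notMem_TRegion h1) (by rwa [rot_rot]),
      rot_rot]
  by_cases h2 : rot (L, 0) t ∈ 𝒯
  · rw [symmGlue_of_mem h2, symmGlue_of_rot_mem h1 h2, rot_rot]
  have h2' : rot (L, 0) (rot (L, 0) t) ∉ 𝒯 := by rwa [rot_rot]
  by_cases h3 : t ∈ ℋ
  · rw [symmGlue_of_notMem h1 h2 h3, symmGlue_of_notMem h2 h2' (rot_mem_HRegion hD h3)]
    obtain ⟨a, j, o | o⟩ := t <;> simp [axisFlip, rot]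
  · rw [symmGlue_of_notMem_of_notMem h1 h2 h3,
      symmGlue_of_notMem_of_notMem h2 h2' ((rot_mem_HRegion_iff hD).not.2 h3)]

theorem isTiling_symmGlue (hD : mir L U = D) (hB : mir L B = B)
    (hbal : h = (freePos L U D B).card + U.card) (hg : IsTiling 𝒯 ∅ g) :
    IsTiling ℋ (HBar ↑B) (symmGlue (L, 0) ℋ 𝒯 g) := by
  have hTH : 𝒯 ⊆ ℋ := TRegion_subset_HRegion
  refine ⟨fun t ht => symmGlue_of_notMem_of_notMem (fun h1 => ht (hTH h1))
    (fun h2 => ht ((rot_mem_HRegion_iff hD).1 (hTH h2))) ht, fun t ht => ?_⟩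
  by_cases h1 : t ∈ 𝒯
  · obtain ⟨hgT, hadj, hgg, -⟩ := hg.2 t h1
    rw [symmGlue_of_mem h1, symmGlue_of_mem hgT]
    have hrow := row_nonneg_of_mem_TRegion h1
    have hrow' := row_nonneg_of_mem_TRegion hgT
    exact ⟨hTH hgT, hadj, hgg, notMem_HBar_of_sameSide (by omega),
      notMem_HBar_of_sameSide (by omega)⟩
  by_cases h2 : rot (L, 0) t ∈ 𝒯
  · obtain ⟨hgT, hadj, hgg, -⟩ := hg.2 _ h2
    rw [symmGlue_of_rot_mem h1 h2]
    have hrow := row_nonneg_of_mem_TRegion h2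
    have hrow' := row_nonneg_of_mem_TRegion hgT
    have hsame : 0 ≤ t.2.1 ↔ 0 ≤ (rot (L, 0) (g (rot (L, 0) t))).2.1 := by
      simp only [rot] at hrow hrow' ⊢
      omega
    refine ⟨rot_mem_HRegion hD (hTH hgT), by rwa [← adj_rot (L, 0), rot_rot], ?_,
      notMem_HBar_of_sameSide hsame, notMem_HBar_of_sameSide hsame.symm⟩
    rw [symmGlue_of_rot_mem (rot_notMem_TRegion hgT) (by rwa [rot_rot]), rot_rot, hgg, rot_rot]
  obtain ⟨i, hi, rfl | rfl⟩ := exists_axis_of_notMem_TRegion hD hB ht h1 h2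
  · have hbar := axis_notMem_HBar (B := B) (mem_freePos.1 hi).2.2.2.2
    rw [symmGlue_axisUp hbal hi, symmGlue_axisDown hD hB hbal hi]
    exact ⟨axisDown_mem_HRegion (pos_of_mem_freePos hbal hi) hi,
      adj_up_iff.2 (Or.inr (Or.inr (by simp [axisDown]))), rfl, hbar.1, hbar.2⟩
  · have hbar := axis_notMem_HBar (B := B) (mem_freePos.1 hi).2.2.2.2
    rw [symmGlue_axisDown hD hB hbal hi, symmGlue_axisUp hbal hi]
    exact ⟨axisUp_mem_HRegion (pos_of_mem_freePos hbal hi) hi,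
      adj_down_iff.2 (Or.inr (Or.inr (by simp [axisUp]))), rfl, hbar.2, hbar.1⟩

theorem symmGlue_piecewise [∀ t, Decidable (t ∈ 𝒯)] {f : Tri → Tri}
    (hf : IsTiling ℋ (HBar ↑B) f)
    (hsym : ∀ t, f (rot (L, 0) t) = rot (L, 0) (f t)) (hD : mir L U = D) (hB : mir L B = B)
    (hUL : U ⊆ Icc 1 L) (hbal : h = (freePos L U D B).card + U.card) :
    symmGlue (L, 0) ℋ 𝒯 (Set.piecewise 𝒯 f id) = f := by
  funext t
  by_cases h1 : t ∈ 𝒯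
  · rw [symmGlue_of_mem h1, Set.piecewise_eq_of_mem _ _ _ h1]
  by_cases h2 : rot (L, 0) t ∈ 𝒯
  · rw [symmGlue_of_rot_mem h1 h2, Set.piecewise_eq_of_mem _ _ _ h2, hsym, rot_rot]
  by_cases ht : t ∈ ℋ
  · obtain ⟨i, hi, rfl | rfl⟩ := exists_axis_of_notMem_TRegion hD hB ht h1 h2
    · rw [symmGlue_axisUp hbal hi, hf.apply_axisUp_of_mem_freePos hUL hbal hi]
    · have hup := hf.apply_axisUp_of_mem_freePos hUL hbal hi
      have hinv := (hf.2 _ (axisUp_mem_HRegion (pos_of_mem_freePos hbal hi) hi)).2.2.1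
      rw [symmGlue_axisDown hD hB hbal hi, ← hup, hinv]
  · rw [symmGlue_of_notMem_of_notMem h1 h2 ht, hf.1 t ht]

theorem Mc_HRegion_eq_M_TRegion (hD : mir L U = D) (hB : mir L B = B) (hUL : U ⊆ Icc 1 L)
    (hbal : h = (freePos L U D B).card + U.card) :
    Mc (L, 0) ℋ (HBar ↑B) = M 𝒯 ∅ := by
  classical
  refine Nat.card_congr
    { toFun := fun f => ⟨Set.piecewise 𝒯 f.1 id,
        IsTiling.piecewise f.2.1 TRegion_subset_HRegion fun _ ht =>
          IsTiling.mapsTo_TRegion f.2.1 hUL hbal ht⟩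
      invFun := fun g => ⟨symmGlue (L, 0) ℋ 𝒯 g.1, isTiling_symmGlue hD hB hbal g.2,
        symmGlue_rot hD⟩
      left_inv := fun f => Subtype.ext (symmGlue_piecewise f.2.1 f.2.2 hD hB hUL hbal)
      right_inv := fun g => Subtype.ext (piecewise_symmGlue g.2.1) }

end Symmetric

lemma McCS_eq_Mc {x y : ℕ} {U D B : Finset ℤ} {N M : ℤ}
    (hN : (x : ℤ) + y + 2 * (U ∪ D).card = N) (hM : 2 * M ≤ N)
    (hU : U ⊆ Icc 1 M) (hD : D ⊆ Icc 1 M) :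
    McCS x y U D B =
      Mc (N, 0) (HRegion N (y + U.card + D.card) (y + U.card + D.card)
        ↑(U ∪ mir N D) ↑(D ∪ mir N U)) (HBar ↑(B ∪ mir N B)) := by
  have hUD : U ∪ mir N D ∪ (D ∪ mir N U) = U ∪ D ∪ mir N (U ∪ D) := by
    rw [mir_union]
    ext x
    simp only [Finset.mem_union]
    tauto
  have hcard := card_union_mir hM (Finset.union_subset hU hD) (Finset.union_subset hU hD)
  simp only [McCS]
  rw [hN, hUD, hcard, card_union_mir hM hU hD, card_union_mir hM hD hU]
  congr 2 <;> push_cast <;> omega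

lemma card_freePos_union_mir {N M : ℤ} {U D B : Finset ℤ} (hN : 0 ≤ N) (hM : 2 * M ≤ N)
    (hU : U ⊆ Icc 1 M) (hD : D ⊆ Icc 1 M) (hB : B ⊆ Icc 1 M) :
    ((freePos N (U ∪ mir N D) (D ∪ mir N U) (B ∪ mir N B)).card : ℤ) =
      N - 2 * (U ∪ D ∪ B).card := by
  have hUDB : U ∪ D ∪ B ⊆ Icc 1 M := Finset.union_subset (Finset.union_subset hU hD) hB
  have hsub := union_mir_subset_Icc hM hUDB hUDB
  have hle := Finset.card_le_card hsub
  rw [card_union_mir hM hUDB hUDB] at hle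
  rw [freePos, union_mir_union_mir_union_mir, Finset.card_sdiff_of_subset hsub,
    card_union_mir hM hUDB hUDB, Int.card_Icc] at *
  omega

/-- base case `x = 2b`. -/
theorem stmt14 (y b : ℕ) (U D B : Finset ℤ) (hb : B.card = b)
    (n : ℕ) (hn : n = (U ∪ D).card) (N : ℕ) (hN : N = 2 * b + y + 2 * n)
    (m : ℕ) (hm : m = 2 * n - U.card - D.card)
    (hU : U ⊆ Icc 1 ((N / 2 : ℕ) : ℤ)) (hD : D ⊆ Icc 1 ((N / 2 : ℕ) : ℤ))
    (hB : B ⊆ Icc 1 ((N / 2 : ℕ) : ℤ))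
    (hBd : B ∩ (U ∪ D) = ∅)
    (O : Finset ℤ) (hO : O = (U ∪ D ∪ B) ∪ mir (N : ℤ) (U ∪ D ∪ B)) :
    McCS (2 * b) y U D B =
      MT ((y + U.card + D.card : ℕ) : ℤ) ((2 * b + m : ℕ) : ℤ)
        ((Icc (1 : ℤ) (N : ℤ) \ O) ∪ U ∪ mir (N : ℤ) D) := by
  have hM : 2 * ((N / 2 : ℕ) : ℤ) ≤ N := by omega
  have hcardUDB : (U ∪ D ∪ B).card = n + b := by
    rw [Finset.card_union_of_disjoint
      (Finset.disjoint_iff_inter_eq_empty.2 (by rwa [Finset.inter_comm])), hn, hb]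
  have hu : U.card ≤ n := hn ▸ Finset.card_le_card Finset.subset_union_left
  have hd : D.card ≤ n := hn ▸ Finset.card_le_card Finset.subset_union_right
  have hbal : ((y + U.card + D.card : ℕ) : ℤ) =
      (freePos N (U ∪ mir N D) (D ∪ mir N U) (B ∪ mir N B)).card + (U ∪ mir N D).card := by
    rw [card_freePos_union_mir (by omega) hM hU hD hB, hcardUDB, card_union_mir hM hU hD]
    push_cast
    omega
  rw [McCS_eq_Mc (by push_cast; omega) hM hU hD, ← Nat.cast_add, ← Nat.cast_add,
    Mc_HRegion_eq_M_TRegion (mir_union_mir N U D) (by rw [mir_union_mir, Finset.union_comm])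
      (union_mir_subset_Icc hM hU hD) hbal, MT, Finset.union_assoc (Icc 1 (N : ℤ) \ O), freePos,
    hO, ← union_mir_union_mir_union_mir]
  congr 2
  omega

end Shuf
end
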